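/- Let V be a finite set, let w be an edge conductance function on V such that the network (V, w) is connected, and let (w_n) be a sequence of edge conductance functions on V converging pointwise to w. Then for all sufficiently large n the network (V, w_n) is connected, and the effective resistances converge: R_{w_n}(x,y) → R_w(x,y) for all x, y ∈ V. In other words, the map associating to an edge conductance function its effective resistance is continuous at every connected network. -/

import Mathlib

open scoped Classical

open Filter

/-- An edge conductance function on a set `V`: nonnegative, symmetric, vanishing on the
diagonal. -/
def IsConductance {V : Type*} (w : V → V → ℝ) : Prop :=
  (∀ x y, 0 ≤ w x y) ∧ (∀ x y, w x y = w y x) ∧ (∀ x, w x x = 0)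

/-- The energy of a function `f : V → ℝ` with respect to edge conductances `w`. -/
noncomputable def energy {V : Type*} [Fintype V] (w : V → V → ℝ) (f : V → ℝ) : ℝ :=
  (1 / 2) * ∑ x, ∑ y, w x y * (f x - f y) ^ 2

/-- The network `(V, w)` is connected. -/
def NetworkConnected {V : Type*} (w : V → V → ℝ) : Prop :=
  ∀ x y : V, Relation.ReflTransGen (fun a b => 0 < w a b) x y

/-- The effective resistance associated with the network `(V, w)`. -/
noncomputable def effRes {V : Type*} [Fintype V] (w : V → V → ℝ) (x y : V) : ℝ :=
  if x = y then 0
  else (sInf {e : ℝ | ∃ f : V → ℝ, f x = 1 ∧ f y = 0 ∧ energy w f = e})⁻¹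


/-!
For `x ≠ y`, `effRes w x y` is the reciprocal of the effective conductance, the infimum of the
energies of potentials `f` with `f x = 1` and `f y = 0`. Truncating a potential to `[0, 1]` does
not increase its energy, so the infimum may be taken over potentials with values in `[0, 1]`,
whose energies move by at most `|V|² / 2 · ‖w - w'‖∞` when the conductances change from `w` to
`w'`. Hence the effective conductance is Lipschitz in the conductances. On a connected network it
is positive, because along a path of positive conductances from `x` to `y` the energy bounds
`(f x - f y)²` from above; so its reciprocal is continuous there. Connectivity persists under
small perturbations since only the finitely many positive conductances matter.
-/

open Finset Filter Topology
open scoped NNReal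

section

variable {V : Type*}

lemma NetworkConnected.eventually_nhds [Finite V] {w : V → V → ℝ} (hconn : NetworkConnected w) :
    ∀ᶠ w' in 𝓝 w, NetworkConnected w' := by
  have hpos : ∀ᶠ w' in 𝓝 w, ∀ a b, 0 < w a b → 0 < w' a b := by
    refine eventually_all.2 fun a => eventually_all.2 fun b => ?_
    by_cases hab : 0 < w a b
    · exact ((continuous_apply_apply a b).tendsto w |>.eventually
        (eventually_gt_nhds hab)).mono fun _ h _ => h
    · exact .of_forall fun _ h => absurd h hab
  exact hpos.mono fun w' hw' x y =>
    Relation.ReflTransGen.mono (fun a b => hw' a b) _ _ (hconn x y)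

variable [Fintype V]

lemma energy_nonneg {w : V → V → ℝ} (hw : ∀ a b, 0 ≤ w a b) (f : V → ℝ) : 0 ≤ energy w f :=
  mul_nonneg (by norm_num)
    (sum_nonneg fun a _ => sum_nonneg fun b _ => mul_nonneg (hw a b) (sq_nonneg _))

lemma mul_sq_sub_le_two_mul_energy {w : V → V → ℝ} (hw : ∀ a b, 0 ≤ w a b) (f : V → ℝ)
    (a b : V) : w a b * (f a - f b) ^ 2 ≤ 2 * energy w f := by
  have hterm : ∀ x y, 0 ≤ w x y * (f x - f y) ^ 2 := fun x y => mul_nonneg (hw x y) (sq_nonneg _)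
  calc w a b * (f a - f b) ^ 2 ≤ ∑ y, w a y * (f a - f y) ^ 2 :=
        single_le_sum (fun y _ => hterm a y) (mem_univ b)
    _ ≤ ∑ x, ∑ y, w x y * (f x - f y) ^ 2 :=
        single_le_sum (f := fun x => ∑ y, w x y * (f x - f y) ^ 2)
          (fun x _ => sum_nonneg fun y _ => hterm x y) (mem_univ a)
    _ = 2 * energy w f := by unfold energy; ring

lemma exists_sq_sub_le_mul_energy {w : V → V → ℝ} (hw : ∀ a b, 0 ≤ w a b) {x z : V}
    (h : Relation.ReflTransGen (fun a b => 0 < w a b) x z) :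
    ∃ C, 0 < C ∧ ∀ f : V → ℝ, (f x - f z) ^ 2 ≤ C * energy w f := by
  induction h with
  | refl => exact ⟨1, one_pos, fun f => by simpa using energy_nonneg hw f⟩
  | @tail b c _ hbc ih =>
    obtain ⟨C, hC, hCf⟩ := ih
    refine ⟨2 * C + 4 / w b c, by positivity, fun f => ?_⟩
    have hdrop : (f b - f c) ^ 2 ≤ 2 / w b c * energy w f := by
      rw [div_mul_eq_mul_div, le_div_iff₀ hbc, mul_comm]
      exact mul_sq_sub_le_two_mul_energy hw f b c
    calc (f x - f c) ^ 2 ≤ 2 * (f x - f b) ^ 2 + 2 * (f b - f c) ^ 2 := by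
          nlinarith [sq_nonneg (f x - 2 * f b + f c)]
      _ ≤ 2 * (C * energy w f) + 2 * (2 / w b c * energy w f) := by gcongr; exact hCf f
      _ = (2 * C + 4 / w b c) * energy w f := by ring

lemma energy_comp_le {w : V → V → ℝ} (hw : ∀ a b, 0 ≤ w a b) {φ : ℝ → ℝ}
    (hφ : LipschitzWith 1 φ) (f : V → ℝ) : energy w (φ ∘ f) ≤ energy w f := by
  refine mul_le_mul_of_nonneg_left (sum_le_sum fun a _ => sum_le_sum fun b _ =>
    mul_le_mul_of_nonneg_left ?_ (hw a b)) (by norm_num)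
  rw [sq_le_sq, ← Real.dist_eq, ← Real.dist_eq]
  simpa using hφ.dist_le_mul (f a) (f b)

lemma energy_le_add_dist (w w' : V → V → ℝ) {g : V → ℝ} (hg : ∀ a b, (g a - g b) ^ 2 ≤ 1) :
    energy w g ≤ energy w' g + Fintype.card V ^ 2 / 2 * dist w w' := by
  have hterm : ∀ a b, w a b * (g a - g b) ^ 2 ≤ w' a b * (g a - g b) ^ 2 + dist w w' := by
    intro a b
    have hdist : w a b - w' a b ≤ dist w w' :=
      calc w a b - w' a b ≤ dist (w a b) (w' a b) := (le_abs_self _).trans (Real.dist_eq _ _).ge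
        _ ≤ dist (w a) (w' a) := dist_le_pi_dist _ _ b
        _ ≤ dist w w' := dist_le_pi_dist _ _ a
    nlinarith [sq_nonneg (g a - g b), hg a b, dist_nonneg (x := w) (y := w')]
  calc energy w g ≤ 1 / 2 * ∑ a, ∑ b, (w' a b * (g a - g b) ^ 2 + dist w w') := by
        unfold energy; gcongr with a _ b _; exact hterm a b
    _ = _ := by simp only [sum_add_distrib, sum_const, card_univ, nsmul_eq_mul, energy]; ring

-- Equals `(effRes w x y)⁻¹` for `x ≠ y`; it is `sInf ∅ = 0` for `x = y`.
noncomputable def effConductance (w : V → V → ℝ) (x y : V) : ℝ :=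
  sInf {e : ℝ | ∃ f : V → ℝ, f x = 1 ∧ f y = 0 ∧ energy w f = e}

variable {w w' : V → V → ℝ} {x y : V}

lemma effConductance_le_energy (hw : ∀ a b, 0 ≤ w a b) {f : V → ℝ} (hfx : f x = 1)
    (hfy : f y = 0) : effConductance w x y ≤ energy w f :=
  csInf_le ⟨0, fun _ ⟨g, _, _, hg⟩ => hg ▸ energy_nonneg hw g⟩ ⟨f, hfx, hfy, rfl⟩

lemma le_effConductance (hxy : x ≠ y) {c : ℝ}
    (h : ∀ f : V → ℝ, f x = 1 → f y = 0 → c ≤ energy w f) : c ≤ effConductance w x y := by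
  refine le_csInf ⟨_, Pi.single x 1, by simp, by simp [hxy.symm], rfl⟩ ?_
  rintro _ ⟨f, hfx, hfy, rfl⟩
  exact h f hfx hfy

lemma effConductance_pos (hw : ∀ a b, 0 ≤ w a b) (hconn : NetworkConnected w) (hxy : x ≠ y) :
    0 < effConductance w x y := by
  obtain ⟨C, hC, hCf⟩ := exists_sq_sub_le_mul_energy hw (hconn x y)
  refine (inv_pos.2 hC).trans_le (le_effConductance hxy fun f hfx hfy => ?_)
  rw [inv_le_iff_one_le_mul₀' hC]
  simpa [hfx, hfy] using hCf f

lemma effConductance_le_add_dist (hw : ∀ a b, 0 ≤ w a b) (hw' : ∀ a b, 0 ≤ w' a b)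
    (hxy : x ≠ y) :
    effConductance w x y ≤ effConductance w' x y + Fintype.card V ^ 2 / 2 * dist w w' := by
  rw [← sub_le_iff_le_add]
  refine le_effConductance hxy fun f hfx hfy => ?_
  let φ : ℝ → ℝ := Subtype.val ∘ Set.projIcc 0 1 zero_le_one
  have hφ : LipschitzWith 1 φ := by
    simpa only [mul_one] using (LipschitzWith.subtype_val _).comp (LipschitzWith.projIcc _)
  have hφ01 : ∀ t, 0 ≤ φ t ∧ φ t ≤ 1 := fun t => (Set.projIcc 0 1 zero_le_one t).2
  have hsq : ∀ a b, (φ (f a) - φ (f b)) ^ 2 ≤ 1 := fun a b => by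
    nlinarith [hφ01 (f a), hφ01 (f b)]
  have hmin : effConductance w x y ≤ energy w (φ ∘ f) :=
    effConductance_le_energy hw (by simp [φ, hfx]) (by simp [φ, hfy])
  linarith [energy_le_add_dist (g := φ ∘ f) w w' hsq, energy_comp_le hw' hφ f]

lemma lipschitzOnWith_effConductance (hxy : x ≠ y) :
    LipschitzOnWith (Fintype.card V ^ 2 / 2 : ℝ≥0) (effConductance · x y)
      {w | ∀ a b, 0 ≤ w a b} := by
  refine LipschitzOnWith.of_dist_le_mul fun w hw w' hw' => ?_
  rw [Real.dist_eq, abs_sub_le_iff]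
  push_cast
  constructor
  · linarith [effConductance_le_add_dist hw hw' hxy]
  · rw [dist_comm]
    linarith [effConductance_le_add_dist hw' hw hxy]

end

/-- Continuity of the effective resistance at connected networks: if conductances `wseq n`
converge pointwise to `w` and `(V, w)` is connected, then `(V, wseq n)` is eventually connected
and the effective resistances converge pointwise. -/
theorem effRes_continuous {V : Type*} [Fintype V] (w : V → V → ℝ) (wseq : ℕ → V → V → ℝ)
    (hw : IsConductance w) (hconn : NetworkConnected w)
    (hcond : ∀ n, IsConductance (wseq n))
    (hlim : ∀ x y, Tendsto (fun n => wseq n x y) atTop (nhds (w x y))) :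
    (∀ᶠ n in atTop, NetworkConnected (wseq n)) ∧
    (∀ x y, Tendsto (fun n => effRes (wseq n) x y) atTop (nhds (effRes w x y))) := by
  have hseq : Tendsto wseq atTop (𝓝 w) :=
    tendsto_pi_nhds.2 fun x => tendsto_pi_nhds.2 (hlim x)
  refine ⟨hseq.eventually hconn.eventually_nhds, fun x y => ?_⟩
  by_cases hxy : x = y
  · simp [effRes, hxy]
  have hseq' : Tendsto wseq atTop (𝓝[{w | ∀ a b, 0 ≤ w a b}] w) :=
    tendsto_nhdsWithin_iff.2 ⟨hseq, .of_forall fun n => (hcond n).1⟩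
  have htendsto :=
    ((lipschitzOnWith_effConductance hxy).continuousOn w hw.1).tendsto.comp hseq'
  simp only [effRes, if_neg hxy]
  exact htendsto.inv₀ (effConductance_pos hw.1 hconn hxy).ne'
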